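/- For any sequence of positive weights π = (π_i)_{i≥1} (not necessarily summable), the GrowingHedge algorithm achieves, for every T ≥ 1 and every expert i ≤ M_T, the regret bound Σ_{t=τ_i}^T (ℓ_t − ℓ_{i,t}) ≤ (1/η) · log( (Σ_{j=1}^{M_T} π_j) / π_i ). -/

import Mathlib

/-!
Rescale the weights by the learner's past loss: `u j t = exp (η L_{t-1}) w j t`. An expert enters
with `u = π j` and each round multiplies its `u` by `exp (η (ℓ_t - ℓ_{j,t}))`, so
`u i (T+1) = π i exp (η R)` with `R` the regret against expert `i`. Exp-concavity says exactly
that a round does not increase the total `u`-weight of the experts present, so that total is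
always at most the sum of the priors of the experts seen so far.
-/

open Finset

theorem Finset.sum_eq_sum_equivFin_symm {ι M : Type*} [AddCommMonoid M] (s : Finset ι)
    (f : ι → M) :
    ∑ j ∈ s, f j = ∑ k : Fin s.card, f (s.equivFin.symm k) := by
  rw [← sum_coe_sort s f, ← s.equivFin.symm.sum_comp]

theorem Finset.sum_Icc_one_add_sum_Ioc {M : Type*} [AddCommMonoid M] (f : ℕ → M) {a b : ℕ}
    (hab : a ≤ b) : ∑ j ∈ Icc 1 a, f j + ∑ j ∈ Ioc a b, f j = ∑ j ∈ Icc 1 b, f j := by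
  have hIcc : ∀ n, Icc 1 n = Ioc 0 n := Icc_add_one_left_eq_Ioc 0
  rw [hIcc, hIcc, sum_Ioc_consecutive _ a.zero_le hab]

theorem sum_Icc_le_sum_prior_of_step {M : ℕ → ℕ} (hM : Monotone M) {u : ℕ → ℕ → ℝ} {π : ℕ → ℝ}
    (hinit : ∀ j ∈ Icc 1 (M 1), u j 1 = π j)
    (henter : ∀ t, 1 ≤ t → ∀ j ∈ Ioc (M t) (M (t + 1)), u j (t + 1) = π j)
    (hstep : ∀ t, 1 ≤ t → ∑ j ∈ Icc 1 (M t), u j (t + 1) ≤ ∑ j ∈ Icc 1 (M t), u j t)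
    {t : ℕ} (ht : 1 ≤ t) : ∑ j ∈ Icc 1 (M t), u j t ≤ ∑ j ∈ Icc 1 (M t), π j := by
  induction t, ht using Nat.le_induction with
  | base => exact (sum_congr rfl hinit).le
  | succ t ht ih =>
    have hMt := hM t.le_succ
    rw [← sum_Icc_one_add_sum_Ioc _ hMt, ← sum_Icc_one_add_sum_Ioc _ hMt,
      sum_congr rfl (henter t ht)]
    exact add_le_add ((hstep t ht).trans ih) le_rfl

theorem eq_mul_exp_sum_Icc_of_succ {a r : ℕ → ℝ} {τ : ℕ}
    (h : ∀ t, τ ≤ t → a (t + 1) = a t * Real.exp (r t)) {T : ℕ} (hT : τ ≤ T) :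
    a (T + 1) = a τ * Real.exp (∑ t ∈ Icc τ T, r t) := by
  induction T, hT using Nat.le_induction with
  | base => simp [h τ le_rfl]
  | succ T hT ih =>
    rw [h (T + 1) (hT.trans T.le_succ), ih, sum_Icc_succ_top (hT.trans T.le_succ), Real.exp_add,
      mul_assoc]

theorem le_one_div_mul_log_div_of_mul_exp_le {η p S R : ℝ} (hη : 0 < η) (hp : 0 < p)
    (h : p * Real.exp (η * R) ≤ S) : R ≤ 1 / η * Real.log (S / p) := by
  have hS : 0 < S / p := div_pos ((mul_pos hp (Real.exp_pos _)).trans_le h) hp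
  rw [one_div, le_inv_mul_iff₀ hη, Real.le_log_iff_exp_le hS, le_div_iff₀' hp]
  exact h

section

variable {E Y : Type*}

def cumLoss (ℓ : E → Y → ℝ) (x : ℕ → E) (y : ℕ → Y) (t : ℕ) : ℝ :=
  ∑ s ∈ Icc 1 t, ℓ (x s) (y s)

theorem cumLoss_succ (ℓ : E → Y → ℝ) (x : ℕ → E) (y : ℕ → Y) (t : ℕ) :
    cumLoss ℓ x y (t + 1) = cumLoss ℓ x y t + ℓ (x (t + 1)) (y (t + 1)) :=
  sum_Icc_succ_top (Nat.le_add_left 1 t) _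

variable [AddCommGroup E] [Module ℝ E]

def IsExpConcave (X : Set E) (ℓ : E → Y → ℝ) (η : ℝ) : Prop :=
  ∀ (yy : Y) (N : ℕ), 1 ≤ N → ∀ xs : Fin N → E, (∀ i, xs i ∈ X) →
    ∀ vv : Fin N → ℝ, (∀ i, 0 ≤ vv i) → (∑ i, vv i) = 1 →
    ℓ (∑ i, vv i • xs i) yy ≤ -(1/η) * Real.log (∑ i, vv i * Real.exp (-η * ℓ (xs i) yy))

namespace IsExpConcave

variable {X : Set E} {ℓ : E → Y → ℝ} {η : ℝ}

theorem sum_mul_exp_le_of_sum_eq_one (h : IsExpConcave X ℓ η) (hη : 0 < η) {ι : Type*}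
    {s : Finset ι} {v : ι → ℝ} {x : ι → E} (hv : ∀ j ∈ s, 0 ≤ v j) (hv1 : ∑ j ∈ s, v j = 1)
    (hx : ∀ j ∈ s, x j ∈ X) (yy : Y) :
    ∑ j ∈ s, v j * Real.exp (-η * ℓ (x j) yy) ≤ Real.exp (-η * ℓ (∑ j ∈ s, v j • x j) yy) := by
  have hs : s.Nonempty := nonempty_of_sum_ne_zero (by rw [hv1]; exact one_ne_zero)
  have hpos : 0 < ∑ j ∈ s, v j * Real.exp (-η * ℓ (x j) yy) := by
    obtain ⟨j, hj, hvj⟩ := exists_lt_of_sum_lt (s := s) (f := fun _ => (0 : ℝ)) (g := v)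
      (by simp [hv1])
    exact sum_pos' (fun j hj => mul_nonneg (hv j hj) (Real.exp_pos _).le)
      ⟨j, hj, mul_pos hvj (Real.exp_pos _)⟩
  have key : ℓ (∑ j ∈ s, v j • x j) yy ≤
      -(1/η) * Real.log (∑ j ∈ s, v j * Real.exp (-η * ℓ (x j) yy)) := by
    rw [s.sum_eq_sum_equivFin_symm (fun j => v j • x j),
      s.sum_eq_sum_equivFin_symm (fun j => v j * Real.exp (-η * ℓ (x j) yy))]
    exact h yy s.card hs.card_pos (fun k => x (s.equivFin.symm k))
      (fun k => hx _ (s.equivFin.symm k).2) (fun k => v (s.equivFin.symm k))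
      (fun k => hv _ (s.equivFin.symm k).2) ((s.sum_eq_sum_equivFin_symm v).symm.trans hv1)
  rw [← Real.log_le_iff_le_exp hpos]
  have := mul_le_mul_of_nonneg_left key hη.le
  rw [← mul_assoc, mul_neg, mul_one_div_cancel hη.ne', neg_one_mul] at this
  linarith

theorem sum_mul_exp_le (h : IsExpConcave X ℓ η) (hη : 0 < η) {ι : Type*} {s : Finset ι}
    {w : ι → ℝ} {x : ι → E} (hw : ∀ j ∈ s, 0 ≤ w j) (hx : ∀ j ∈ s, x j ∈ X) (yy : Y) :
    ∑ j ∈ s, w j * Real.exp (-η * ℓ (x j) yy) ≤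
      (∑ j ∈ s, w j) * Real.exp (-η * ℓ ((∑ j ∈ s, w j)⁻¹ • ∑ j ∈ s, w j • x j) yy) := by
  rcases (sum_nonneg hw).eq_or_lt with hW | hW
  · have hw0 : ∀ j ∈ s, w j = 0 := (sum_eq_zero_iff_of_nonneg hw).1 hW.symm
    rw [← hW, zero_mul, sum_eq_zero fun j hj => by rw [hw0 j hj, zero_mul]]
  · have := h.sum_mul_exp_le_of_sum_eq_one hη (v := fun j => w j / ∑ j ∈ s, w j)
      (fun j hj => div_nonneg (hw j hj) hW.le) (by rw [← sum_div, div_self hW.ne']) hx yy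
    simp only [div_eq_inv_mul, mul_smul, mul_assoc, ← mul_sum, ← smul_sum] at this
    rwa [inv_mul_le_iff₀ hW] at this

end IsExpConcave

structure GrowingHedgeRun (ℓ : E → Y → ℝ) (η : ℝ) (M : ℕ → ℕ) (π : ℕ → ℝ)
    (xe : ℕ → ℕ → E) (y : ℕ → Y) (xl : ℕ → E) (w : ℕ → ℕ → ℝ) : Prop where
  init : ∀ i, 1 ≤ i → i ≤ M 1 → w i 1 = π i
  update : ∀ t, 1 ≤ t → ∀ i, 1 ≤ i → i ≤ M t →
    w i (t + 1) = w i t * Real.exp (-η * ℓ (xe i t) (y t))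
  enter : ∀ t, 1 ≤ t → ∀ i, M t + 1 ≤ i → i ≤ M (t + 1) →
    w i (t + 1) = π i * Real.exp (-η * cumLoss ℓ xl y t)
  predict : ∀ t, 1 ≤ t →
    xl t = (∑ i ∈ Icc 1 (M t), w i t)⁻¹ • ∑ i ∈ Icc 1 (M t), w i t • xe i t

noncomputable def normalizedWeight (ℓ : E → Y → ℝ) (η : ℝ) (y : ℕ → Y) (xl : ℕ → E)
    (w : ℕ → ℕ → ℝ) (j t : ℕ) : ℝ :=
  Real.exp (η * cumLoss ℓ xl y (t - 1)) * w j t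

namespace GrowingHedgeRun

variable {ℓ : E → Y → ℝ} {η : ℝ} {M : ℕ → ℕ} {π : ℕ → ℝ} {xe : ℕ → ℕ → E} {y : ℕ → Y}
  {xl : ℕ → E} {w : ℕ → ℕ → ℝ}

theorem weight_nonneg (h : GrowingHedgeRun ℓ η M π xe y xl w) (hπ : ∀ i, 1 ≤ i → 0 ≤ π i) :
    ∀ t, 1 ≤ t → ∀ j, 1 ≤ j → j ≤ M t → 0 ≤ w j t := by
  intro t ht
  induction t, ht using Nat.le_induction with
  | base => exact fun j hj hjM => h.init j hj hjM ▸ hπ j hj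
  | succ t ht ih =>
    intro j hj hjM
    by_cases hjt : j ≤ M t
    · rw [h.update t ht j hj hjt]
      exact mul_nonneg (ih j hj hjt) (Real.exp_pos _).le
    · rw [h.enter t ht j (by omega) hjM]
      exact mul_nonneg (hπ j hj) (Real.exp_pos _).le

theorem normalizedWeight_nonneg (h : GrowingHedgeRun ℓ η M π xe y xl w)
    (hπ : ∀ i, 1 ≤ i → 0 ≤ π i) {t j : ℕ} (ht : 1 ≤ t) (hj : 1 ≤ j) (hjt : j ≤ M t) :
    0 ≤ normalizedWeight ℓ η y xl w j t :=
  mul_nonneg (Real.exp_pos _).le (h.weight_nonneg hπ t ht j hj hjt)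

theorem normalizedWeight_one (h : GrowingHedgeRun ℓ η M π xe y xl w) :
    ∀ j ∈ Icc 1 (M 1), normalizedWeight ℓ η y xl w j 1 = π j := fun j hj => by
  rw [mem_Icc] at hj
  simp [normalizedWeight, cumLoss, h.init j hj.1 hj.2]

theorem normalizedWeight_succ_of_enter (h : GrowingHedgeRun ℓ η M π xe y xl w) {t : ℕ}
    (ht : 1 ≤ t) : ∀ j ∈ Ioc (M t) (M (t + 1)), normalizedWeight ℓ η y xl w j (t + 1) = π j :=
  fun j hj => by
  rw [mem_Ioc] at hj
  rw [normalizedWeight, Nat.add_sub_cancel, h.enter t ht j hj.1 hj.2, mul_left_comm,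
    ← Real.exp_add]
  simp

theorem normalizedWeight_succ (h : GrowingHedgeRun ℓ η M π xe y xl w) {t j : ℕ} (ht : 1 ≤ t)
    (hj : 1 ≤ j) (hjt : j ≤ M t) :
    normalizedWeight ℓ η y xl w j (t + 1) =
      normalizedWeight ℓ η y xl w j t * Real.exp (η * (ℓ (xl t) (y t) - ℓ (xe j t) (y t))) := by
  obtain ⟨s, rfl⟩ : ∃ s, t = s + 1 := ⟨t - 1, by omega⟩
  simp only [normalizedWeight, Nat.add_sub_cancel, h.update (s + 1) ht j hj hjt, cumLoss_succ]
  rw [mul_left_comm, ← Real.exp_add, mul_right_comm, ← Real.exp_add]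
  ring_nf

theorem normalizedWeight_entry (h : GrowingHedgeRun ℓ η M π xe y xl w) {i τ : ℕ} (hi : 1 ≤ i)
    (hτ : 1 ≤ τ) (hiτ : i ≤ M τ) (hτmin : ∀ s, 1 ≤ s → i ≤ M s → τ ≤ s) :
    normalizedWeight ℓ η y xl w i τ = π i := by
  rcases eq_or_lt_of_le hτ with rfl | hτ1
  · exact h.normalizedWeight_one i (mem_Icc.2 ⟨hi, hiτ⟩)
  · obtain ⟨s, rfl⟩ : ∃ s, τ = s + 1 := ⟨τ - 1, by omega⟩
    refine h.normalizedWeight_succ_of_enter (by omega) i (mem_Ioc.2 ⟨?_, hiτ⟩)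
    by_contra! his
    have := hτmin s (by omega) his
    omega

theorem normalizedWeight_eq_mul_exp_regret (h : GrowingHedgeRun ℓ η M π xe y xl w)
    (hM : Monotone M) {i τ T : ℕ} (hi : 1 ≤ i) (hτ : 1 ≤ τ) (hiτ : i ≤ M τ)
    (hτmin : ∀ s, 1 ≤ s → i ≤ M s → τ ≤ s) (hτT : τ ≤ T) :
    normalizedWeight ℓ η y xl w i (T + 1) =
      π i * Real.exp (η * ∑ t ∈ Icc τ T, (ℓ (xl t) (y t) - ℓ (xe i t) (y t))) := by
  rw [eq_mul_exp_sum_Icc_of_succ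
      (fun t ht => h.normalizedWeight_succ (hτ.trans ht) hi (hiτ.trans (hM ht))) hτT,
    h.normalizedWeight_entry hi hτ hiτ hτmin, mul_sum]

theorem sum_normalizedWeight_succ_le (h : GrowingHedgeRun ℓ η M π xe y xl w) {X : Set E}
    (hℓ : IsExpConcave X ℓ η) (hη : 0 < η) {t : ℕ} (ht : 1 ≤ t)
    (hxe : ∀ j, 1 ≤ j → j ≤ M t → xe j t ∈ X) (hw : ∀ j, 1 ≤ j → j ≤ M t → 0 ≤ w j t) :
    ∑ j ∈ Icc 1 (M t), normalizedWeight ℓ η y xl w j (t + 1) ≤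
      ∑ j ∈ Icc 1 (M t), normalizedWeight ℓ η y xl w j t := by
  have hconc := hℓ.sum_mul_exp_le hη (s := Icc 1 (M t)) (w := fun j => w j t)
    (x := fun j => xe j t) (fun j hj => hw j (mem_Icc.1 hj).1 (mem_Icc.1 hj).2)
    (fun j hj => hxe j (mem_Icc.1 hj).1 (mem_Icc.1 hj).2) (y t)
  rw [← h.predict t ht] at hconc
  obtain ⟨s, rfl⟩ : ∃ s, t = s + 1 := ⟨t - 1, by omega⟩
  simp only [normalizedWeight, ← mul_sum, Nat.add_sub_cancel]
  rw [sum_congr rfl fun j hj => h.update (s + 1) ht j (mem_Icc.1 hj).1 (mem_Icc.1 hj).2]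
  calc _ ≤ Real.exp (η * cumLoss ℓ xl y (s + 1)) *
        ((∑ j ∈ Icc 1 (M (s + 1)), w j (s + 1)) * Real.exp (-η * ℓ (xl (s + 1)) (y (s + 1)))) := by
        gcongr
    _ = _ := by
      rw [cumLoss_succ, mul_left_comm, ← Real.exp_add, mul_comm]
      ring_nf

end GrowingHedgeRun

end

theorem growingHedge_regret_general
    {E : Type*} [AddCommGroup E] [Module ℝ E] {Y : Type*}
    (X : Set E) (ℓ : E → Y → ℝ) (η : ℝ) (hη : 0 < η)
    (hexp : ∀ (yy : Y) (N : ℕ), 1 ≤ N → ∀ xs : Fin N → E, (∀ i, xs i ∈ X) →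
      ∀ vv : Fin N → ℝ, (∀ i, 0 ≤ vv i) → (∑ i, vv i) = 1 →
      ℓ (∑ i, vv i • xs i) yy ≤ -(1/η) * Real.log (∑ i, vv i * Real.exp (-η * ℓ (xs i) yy)))
    -- growing expert ensemble: M t experts at time t, nondecreasing, at least one
    (M : ℕ → ℕ) (hMmono : Monotone M)
    -- τ i is the entry time of expert i : the least t ≥ 1 with i ≤ M t
    (τ : ℕ → ℕ)
    (hτ : ∀ i t, 1 ≤ i → 1 ≤ t → i ≤ M t → 1 ≤ τ i ∧ i ≤ M (τ i) ∧ τ i ≤ t)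
    (π : ℕ → ℝ) (hπpos : ∀ i, 1 ≤ i → 0 < π i)
    (xe : ℕ → ℕ → E) (hxe : ∀ i t, 1 ≤ t → 1 ≤ i → i ≤ M t → xe i t ∈ X)
    (y : ℕ → Y) (xl : ℕ → E) (w : ℕ → ℕ → ℝ)
    -- GrowingHedge weights: initialization, update, introduction of new experts
    (hw1 : ∀ i, 1 ≤ i → i ≤ M 1 → w i 1 = π i)
    (hwupd : ∀ t, 1 ≤ t → ∀ i, 1 ≤ i → i ≤ M t →
      w i (t+1) = w i t * Real.exp (-η * ℓ (xe i t) (y t)))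
    (hwnew : ∀ t, 1 ≤ t → ∀ i, M t + 1 ≤ i → i ≤ M (t+1) →
      w i (t+1) = π i * Real.exp (-η * ∑ s ∈ Finset.Icc 1 t, ℓ (xl s) (y s)))
    -- GrowingHedge prediction
    (hxl : ∀ t, 1 ≤ t → xl t =
      (∑ i ∈ Finset.Icc 1 (M t), w i t)⁻¹ •
        ∑ i ∈ Finset.Icc 1 (M t), w i t • xe i t) :
    ∀ T : ℕ, 1 ≤ T → ∀ i : ℕ, 1 ≤ i → i ≤ M T →
      ∑ t ∈ Finset.Icc (τ i) T, (ℓ (xl t) (y t) - ℓ (xe i t) (y t))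
        ≤ (1/η) * Real.log ((∑ j ∈ Finset.Icc 1 (M T), π j) / π i) := by
  intro T hT i hi hiT
  have hrun : GrowingHedgeRun ℓ η M π xe y xl w := ⟨hw1, hwupd, hwnew, hxl⟩
  have hπ : ∀ j, 1 ≤ j → 0 ≤ π j := fun j hj => (hπpos j hj).le
  have hstep : ∀ t, 1 ≤ t → ∑ j ∈ Icc 1 (M t), normalizedWeight ℓ η y xl w j (t + 1) ≤
      ∑ j ∈ Icc 1 (M t), normalizedWeight ℓ η y xl w j t := fun t ht =>
    hrun.sum_normalizedWeight_succ_le hexp hη ht (fun j hj hjt => hxe j t ht hj hjt)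
      (hrun.weight_nonneg hπ t ht)
  obtain ⟨hτ1, hiτ, hτT⟩ := hτ i T hi hT hiT
  apply le_one_div_mul_log_div_of_mul_exp_le hη (hπpos i hi)
  calc _ = normalizedWeight ℓ η y xl w i (T + 1) :=
        (hrun.normalizedWeight_eq_mul_exp_regret hMmono hi hτ1 hiτ
          (fun s hs his => (hτ i s hi hs his).2.2) hτT).symm
    _ ≤ ∑ j ∈ Icc 1 (M T), normalizedWeight ℓ η y xl w j (T + 1) :=
        single_le_sum (fun j hj => hrun.normalizedWeight_nonneg hπ (hT.trans T.le_succ)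
          (mem_Icc.1 hj).1 ((mem_Icc.1 hj).2.trans (hMmono T.le_succ))) (mem_Icc.2 ⟨hi, hiT⟩)
    _ ≤ ∑ j ∈ Icc 1 (M T), normalizedWeight ℓ η y xl w j T := hstep T hT
    _ ≤ _ := sum_Icc_le_sum_prior_of_step hMmono hrun.normalizedWeight_one
        (fun t ht => hrun.normalizedWeight_succ_of_enter ht) hstep hT

/-- **GrowingHedge regret bound (Theorem 1).**
For any sequence of positive weights π (not necessarily summable), the GrowingHedge
algorithm achieves, for every T ≥ 1 and every expert i ≤ M_T,
Σ_{t=τ_i}^T (ℓ_t − ℓ_{i,t}) ≤ (1/η)·log( (Σ_{j=1}^{M_T} π_j) / π_i ). -/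
theorem growingHedge_regret
    {E : Type*} [AddCommGroup E] [Module ℝ E] {Y : Type*}
    (X : Set E) (ℓ : E → Y → ℝ) (η : ℝ) (hη : 0 < η)
    (hexp : ∀ (yy : Y) (N : ℕ), 1 ≤ N → ∀ xs : Fin N → E, (∀ i, xs i ∈ X) →
      ∀ vv : Fin N → ℝ, (∀ i, 0 ≤ vv i) → (∑ i, vv i) = 1 →
      ℓ (∑ i, vv i • xs i) yy ≤ -(1/η) * Real.log (∑ i, vv i * Real.exp (-η * ℓ (xs i) yy)))
    -- growing expert ensemble: M t experts at time t, nondecreasing, at least one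
    (M : ℕ → ℕ) (hMpos : ∀ t, 1 ≤ t → 1 ≤ M t) (hMmono : Monotone M)
    -- τ i is the entry time of expert i : the least t ≥ 1 with i ≤ M t
    (τ : ℕ → ℕ)
    (hτ : ∀ i t, 1 ≤ i → 1 ≤ t → i ≤ M t → 1 ≤ τ i ∧ i ≤ M (τ i) ∧ τ i ≤ t)
    (π : ℕ → ℝ) (hπpos : ∀ i, 1 ≤ i → 0 < π i)
    (xe : ℕ → ℕ → E) (hxe : ∀ i t, 1 ≤ t → 1 ≤ i → i ≤ M t → xe i t ∈ X)
    (y : ℕ → Y) (xl : ℕ → E) (w : ℕ → ℕ → ℝ)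
    -- GrowingHedge weights: initialization, update, introduction of new experts
    (hw1 : ∀ i, 1 ≤ i → i ≤ M 1 → w i 1 = π i)
    (hwupd : ∀ t, 1 ≤ t → ∀ i, 1 ≤ i → i ≤ M t →
      w i (t+1) = w i t * Real.exp (-η * ℓ (xe i t) (y t)))
    (hwnew : ∀ t, 1 ≤ t → ∀ i, M t + 1 ≤ i → i ≤ M (t+1) →
      w i (t+1) = π i * Real.exp (-η * ∑ s ∈ Finset.Icc 1 t, ℓ (xl s) (y s)))
    -- GrowingHedge prediction
    (hxl : ∀ t, 1 ≤ t → xl t =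
      (∑ i ∈ Finset.Icc 1 (M t), w i t)⁻¹ •
        ∑ i ∈ Finset.Icc 1 (M t), w i t • xe i t) :
    ∀ T : ℕ, 1 ≤ T → ∀ i : ℕ, 1 ≤ i → i ≤ M T →
      ∑ t ∈ Finset.Icc (τ i) T, (ℓ (xl t) (y t) - ℓ (xe i t) (y t))
        ≤ (1/η) * Real.log ((∑ j ∈ Finset.Icc 1 (M T), π j) / π i) :=
  growingHedge_regret_general X ℓ η hη hexp M hMmono τ hτ π hπpos xe hxe y xl w hw1 hwupd hwnew hxl
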